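/- Let d = 2, G(t,y) = (2π)^{−1}(t² − |y|²)^{−1/2}·1_{{|y|<t}}, and fix T, R > 0 and γ₂ ∈ (0,1]. Let v₀ : ℝ² → ℝ be γ₂-Hölder continuous with finite seminorm ‖v₀‖_{γ₂} = sup_{x≠y} |v₀(x)−v₀(y)|/|x−y|^{γ₂}. Then for all 0 < t ≤ t̄ ≤ T and all x ∈ ℝ² with |x| ≤ R: |∫_{ℝ²} G(t,y) v₀(x−y) dy − ∫_{ℝ²} G(t̄,y) v₀(x−y) dy| ≤ T·‖v₀‖_{γ₂}·|t−t̄|^{γ₂} + ‖v₀‖_{∞,R+T}·|t−t̄|, where ‖v₀‖_{∞,R+T} = sup_{|z|≤R+T} |v₀(z)|. -/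

import Mathlib

/-!
Substituting `y = t • z` gives `(G(t) ∗ v₀)(x) = ∫ G(1,z) · t v₀(x - t z) dz`, and `G(1,·)` is a
probability density on the unit disc (`∫₀¹ r / √(1 - r²) dr = 1`). For `|z| < 1` the two rescaled
integrands differ by at most `t |v₀(x - t z) - v₀(x - t' z)| + |t - t'| |v₀(x - t' z)|`, which the
Hölder bound and the sup bound on the ball of radius `R + T` control.
-/

open MeasureTheory

/-- The fundamental solution of the wave operator in spatial dimension 2. -/
noncomputable def G2 (t : ℝ) (y : EuclideanSpace ℝ (Fin 2)) : ℝ :=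
  if ‖y‖ < t then (2 * Real.pi)⁻¹ / Real.sqrt (t ^ 2 - ‖y‖ ^ 2) else 0

open Set Real Filter Topology

lemma integral_div_sqrt_one_sub_sq : ∫ r in (0 : ℝ)..1, r / √(1 - r ^ 2) = 1 := by
  have hcont : ContinuousOn (fun r : ℝ => -√(1 - r ^ 2)) (Icc 0 1) := by fun_prop
  have hderiv :
      ∀ r ∈ Ioo (0 : ℝ) 1, HasDerivAt (fun r : ℝ => -√(1 - r ^ 2)) (r / √(1 - r ^ 2)) r := by
    intro r ⟨hr0, hr1⟩
    have hpos : 0 < 1 - r ^ 2 := by nlinarith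
    refine (((hasDerivAt_pow 2 r).const_sub 1).sqrt hpos.ne').neg.congr_deriv ?_
    field_simp
    ring
  have hint : IntervalIntegrable (fun r : ℝ => r / √(1 - r ^ 2)) volume 0 1 :=
    (intervalIntegrable_iff_integrableOn_Ioc_of_le zero_le_one).2 <|
      intervalIntegral.integrableOn_deriv_of_nonneg hcont hderiv fun r hr => by
        have := hr.1.le; positivity
  rw [intervalIntegral.integral_eq_sub_of_hasDerivAt_of_le zero_le_one hcont hderiv hint]
  norm_num

lemma G2_nonneg (t : ℝ) (y : EuclideanSpace ℝ (Fin 2)) : 0 ≤ G2 t y := by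
  unfold G2; split_ifs <;> positivity

lemma norm_lt_of_G2_ne_zero {t : ℝ} {y : EuclideanSpace ℝ (Fin 2)} (h : G2 t y ≠ 0) : ‖y‖ < t := by
  by_contra hy
  exact h (if_neg hy)

lemma G2_smul {s : ℝ} (hs : 0 < s) (z : EuclideanSpace ℝ (Fin 2)) :
    G2 s (s • z) = s⁻¹ * G2 1 z := by
  have hnorm : ‖s • z‖ = s * ‖z‖ := by rw [norm_smul, Real.norm_of_nonneg hs.le]
  simp only [G2, hnorm, mul_lt_iff_lt_one_right hs, one_pow]
  split_ifs
  · rw [show s ^ 2 - (s * ‖z‖) ^ 2 = s ^ 2 * (1 - ‖z‖ ^ 2) by ring, Real.sqrt_mul (by positivity),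
      Real.sqrt_sq hs.le]
    field_simp
  · rw [mul_zero]

lemma integral_G2_mul_eq {s : ℝ} (hs : 0 < s) (f : EuclideanSpace ℝ (Fin 2) → ℝ) :
    ∫ y, G2 s y * f y = ∫ z, G2 1 z * (s * f (s • z)) := by
  have := Measure.integral_comp_smul volume (fun y => G2 s y * f y) s
  rw [finrank_euclideanSpace_fin, abs_of_pos (by positivity), smul_eq_mul] at this
  simp_rw [G2_smul hs] at this
  calc ∫ y, G2 s y * f y = s ^ 2 * ∫ z, s⁻¹ * G2 1 z * f (s • z) := by
        rw [this]; field_simp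
    _ = ∫ z, G2 1 z * (s * f (s • z)) := by
        rw [← integral_const_mul]; congr with z; field_simp

lemma integral_G2_one : ∫ y, G2 1 y = 1 := by
  change ∫ y, (if ‖y‖ < 1 then (2 * π)⁻¹ / √(1 ^ 2 - ‖y‖ ^ 2) else 0) = 1
  have hpolar := integral_fun_norm_addHaar (volume : Measure (EuclideanSpace ℝ (Fin 2)))
    (fun r : ℝ => if r < 1 then (2 * π)⁻¹ / √(1 ^ 2 - r ^ 2) else 0)
  rw [finrank_euclideanSpace_fin] at hpolar
  have hball : volume.real (Metric.ball (0 : EuclideanSpace ℝ (Fin 2)) 1) = π := by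
    simp [measureReal_def, EuclideanSpace.volume_ball_fin_two, pi_nonneg]
  have hradial : ∫ r in Ioi (0 : ℝ),
      r ^ (2 - 1) • (if r < 1 then (2 * π)⁻¹ / √(1 ^ 2 - r ^ 2) else 0) = (2 * π)⁻¹ := by
    rw [setIntegral_eq_of_subset_of_forall_sdiff_eq_zero measurableSet_Ioi Ioo_subset_Ioi_self
      fun r hr => ?_]
    · rw [setIntegral_congr_fun measurableSet_Ioo (g := fun r => (2 * π)⁻¹ * (r / √(1 - r ^ 2)))
          fun r hr => by
          rw [if_pos (mem_Ioo.1 hr).2, one_pow, smul_eq_mul, pow_one]; ring,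
        integral_const_mul, ← integral_Ioc_eq_integral_Ioo,
        ← intervalIntegral.integral_of_le zero_le_one, integral_div_sqrt_one_sub_sq, mul_one]
    · have : ¬ r < 1 := fun h => hr.2 ⟨hr.1, h⟩
      simp [this]
  rw [hpolar, hball, hradial]
  field_simp
  norm_num

lemma integrable_G2_one : Integrable (G2 1) := integrable_of_integral_eq_one integral_G2_one

section Holder

variable {E : Type*} [NormedAddCommGroup E] {f : E → ℝ} {K γ : ℝ}

lemma continuous_of_abs_sub_le_mul_norm_sub_rpow (hγ : 0 < γ)
    (hf : ∀ a b, |f a - f b| ≤ K * ‖a - b‖ ^ γ) : Continuous f := by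
  refine continuous_iff_continuousAt.2 fun x => tendsto_iff_dist_tendsto_zero.2 ?_
  have hlim : Tendsto (fun y => K * ‖y - x‖ ^ γ) (𝓝 x) (𝓝 0) := by
    have := (((continuous_id.sub continuous_const : Continuous fun y : E => y - x).norm.rpow_const
      fun _ => Or.inr hγ.le).const_mul K).tendsto x
    simpa [hγ.ne'] using this
  exact squeeze_zero (fun _ => dist_nonneg) (fun y => (hf y x).trans_eq' (Real.dist_eq _ _)) hlim

lemma nonneg_of_abs_sub_le_mul_norm_sub_rpow [Nontrivial E]
    (hf : ∀ a b, |f a - f b| ≤ K * ‖a - b‖ ^ γ) : 0 ≤ K := by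
  obtain ⟨a, b, hab⟩ := exists_pair_ne E
  have hpos : 0 < ‖a - b‖ ^ γ := Real.rpow_pos_of_pos (norm_pos_iff.2 (sub_ne_zero.2 hab)) γ
  exact nonneg_of_mul_nonneg_left ((abs_nonneg _).trans (hf a b)) hpos

end Holder

lemma abs_integral_mul_le_of_forall_abs_le {α : Type*} [MeasurableSpace α] {μ : Measure α}
    {ρ h : α → ℝ} {C : ℝ} (hρ : 0 ≤ ρ) (hρ1 : ∫ x, ρ x ∂μ = 1)
    (hh : ∀ x, ρ x ≠ 0 → |h x| ≤ C) : |∫ x, ρ x * h x ∂μ| ≤ C := by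
  calc |∫ x, ρ x * h x ∂μ| ≤ ∫ x, |ρ x * h x| ∂μ := abs_integral_le_integral_abs
    _ ≤ ∫ x, C * ρ x ∂μ := by
      refine integral_mono_of_nonneg (.of_forall fun x => abs_nonneg _)
        ((integrable_of_integral_eq_one hρ1).const_mul C) (.of_forall fun x => ?_)
      change |ρ x * h x| ≤ C * ρ x
      rw [abs_mul, abs_of_nonneg (hρ x), mul_comm]
      by_cases hx : ρ x = 0
      · simp [hx]
      · exact mul_le_mul_of_nonneg_right (hh x hx) (hρ x)
    _ = C := by rw [integral_const_mul, hρ1, mul_one]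

lemma MeasureTheory.Integrable.mul_continuous_of_support_subset {X : Type*} [TopologicalSpace X]
    [T2Space X] [MeasurableSpace X] [OpensMeasurableSpace X] [SecondCountableTopology X]
    {μ : Measure X} {ρ h : X → ℝ} {K : Set X} (hρ : Integrable ρ μ) (hh : Continuous h)
    (hK : IsCompact K) (hρK : Function.support ρ ⊆ K) : Integrable (fun x => ρ x * h x) μ := by
  rw [← integrableOn_iff_integrable_of_support_subset
    ((Function.support_mul_subset_left ρ h).trans hρK)]
  exact hρ.integrableOn.mul_continuousOn hh.continuousOn hK

lemma abs_mul_sub_mul_le {p q t t' T C M : ℝ} (hpq : |p - q| ≤ C) (hq : |q| ≤ M) (ht : 0 ≤ t)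
    (htT : t ≤ T) : |t * p - t' * q| ≤ T * C + M * |t - t'| :=
  calc |t * p - t' * q| = |t * (p - q) + (t - t') * q| := by ring_nf
    _ ≤ t * |p - q| + |t - t'| * |q| :=
      (abs_add_le _ _).trans_eq (by rw [abs_mul, abs_mul, abs_of_nonneg ht])
    _ ≤ T * C + M * |t - t'| := by
      have hC : 0 ≤ C := (abs_nonneg _).trans hpq
      nlinarith [abs_nonneg (t - t'), abs_nonneg (p - q)]

theorem stmt7_general (T R γ₂ K M : ℝ) (hγ : 0 < γ₂)
    (v₀ : EuclideanSpace ℝ (Fin 2) → ℝ)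
    (hK : ∀ a b : EuclideanSpace ℝ (Fin 2), |v₀ a - v₀ b| ≤ K * ‖a - b‖ ^ γ₂)
    (hM : ∀ z : EuclideanSpace ℝ (Fin 2), ‖z‖ ≤ R + T → |v₀ z| ≤ M) :
    ∀ t t' : ℝ, 0 < t → t ≤ t' → t' ≤ T →
      ∀ x : EuclideanSpace ℝ (Fin 2), ‖x‖ ≤ R →
      |(∫ y : EuclideanSpace ℝ (Fin 2), G2 t y * v₀ (x - y))
          - ∫ y : EuclideanSpace ℝ (Fin 2), G2 t' y * v₀ (x - y)|
        ≤ T * K * |t - t'| ^ γ₂ + M * |t - t'| := by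
  intro t t' ht htt' ht'T x hx
  have hK0 : 0 ≤ K := nonneg_of_abs_sub_le_mul_norm_sub_rpow hK
  have hv : Continuous v₀ := continuous_of_abs_sub_le_mul_norm_sub_rpow hγ hK
  have hint (s : ℝ) : Integrable fun z => G2 1 z * (s * v₀ (x - s • z)) :=
    integrable_G2_one.mul_continuous_of_support_subset (by fun_prop) (isCompact_closedBall 0 1)
      fun z hz => mem_closedBall_zero_iff.2 (norm_lt_of_G2_ne_zero hz).le
  rw [integral_G2_mul_eq ht, integral_G2_mul_eq (ht.trans_le htt'),
    ← integral_sub (hint t) (hint t')]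
  simp_rw [← mul_sub]
  refine abs_integral_mul_le_of_forall_abs_le (G2_nonneg 1) integral_G2_one fun z hz => ?_
  have hz : ‖z‖ < 1 := norm_lt_of_G2_ne_zero hz
  rw [mul_assoc T K]
  refine abs_mul_sub_mul_le ?_ (hM _ ?_) ht.le (htt'.trans ht'T)
  · calc |v₀ (x - t • z) - v₀ (x - t' • z)| ≤ K * ‖(x - t • z) - (x - t' • z)‖ ^ γ₂ := hK _ _
      _ ≤ K * |t - t'| ^ γ₂ := by
        gcongr
        rw [sub_sub_sub_cancel_left, ← sub_smul, norm_smul, Real.norm_eq_abs, abs_sub_comm]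
        exact mul_le_of_le_one_right (abs_nonneg _) hz.le
  · calc ‖x - t' • z‖ ≤ ‖x‖ + t' * ‖z‖ := by
          simpa [norm_smul, abs_of_pos (ht.trans_le htt')] using norm_sub_le x (t' • z)
      _ ≤ R + T := by nlinarith [norm_nonneg z]

/-- time increments of `G(t) ∗ v₀` in dimension 2 for a `γ₂`-Hölder
function `v₀`, with Hölder constant `K` and sup bound `M` on the ball of radius `R+T`. -/
theorem stmt7 (T R γ₂ K M : ℝ) (hT : 0 < T) (hR : 0 < R) (hγ : 0 < γ₂) (hγ' : γ₂ ≤ 1)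
    (v₀ : EuclideanSpace ℝ (Fin 2) → ℝ)
    (hK : ∀ a b : EuclideanSpace ℝ (Fin 2), |v₀ a - v₀ b| ≤ K * ‖a - b‖ ^ γ₂)
    (hM : ∀ z : EuclideanSpace ℝ (Fin 2), ‖z‖ ≤ R + T → |v₀ z| ≤ M) :
    ∀ t t' : ℝ, 0 < t → t ≤ t' → t' ≤ T →
      ∀ x : EuclideanSpace ℝ (Fin 2), ‖x‖ ≤ R →
      |(∫ y : EuclideanSpace ℝ (Fin 2), G2 t y * v₀ (x - y))
          - ∫ y : EuclideanSpace ℝ (Fin 2), G2 t' y * v₀ (x - y)|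
        ≤ T * K * |t - t'| ^ γ₂ + M * |t - t'| :=
  stmt7_general T R γ₂ K M hγ v₀ hK hM
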